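/- arXiv:1412.3085 — 5 statements merged into one kernel-verified Lean document; each statement's English description precedes it below -/
import Mathlib

section
/- For every N ≥ 1, ∫_{[−π,π]^N} ∏_{1≤i<j≤N} |e^{iθ_i} − e^{iθ_j}|² dθ_1⋯dθ_N = (2π)^N · N!. -/
/-!
Expanding the Vandermonde determinant of `z_k = e^{iθ_k}` over permutations writes it as
`∑_σ sign σ · ∏_k z_k^{σ⁻¹ k}`, a trigonometric polynomial whose `N!` monomials have pairwise
distinct exponent vectors. The characters `θ ↦ e^{i⟨m, θ⟩}` are orthogonal on `[−π, π]^N`, each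
of squared norm `(2π)^N`, so by Parseval `∫ |det|² = (2π)^N · ∑_σ |sign σ|² = (2π)^N · N!`.
-/

open MeasureTheory Real

/-- The squared modulus of the Vandermonde determinant of the points `e^{iθ_k}`:
`Δ(θ) = ∏_{1 ≤ i < j ≤ N} |e^{iθ_i} − e^{iθ_j}|²`. -/
noncomputable def vdm2 {N : ℕ} (θ : Fin N → ℝ) : ℝ :=
  ∏ i : Fin N, ∏ j ∈ Finset.Ioi i,
    ‖Complex.exp ((θ i : ℂ) * Complex.I) - Complex.exp ((θ j : ℂ) * Complex.I)‖ ^ 2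

open Complex (I normSq)
open scoped Complex ComplexConjugate
open Equiv (Perm)
open Matrix (vandermonde)

theorem integral_Icc_exp_int_mul_I (m : ℤ) :
    ∫ x in Set.Icc (-π) π, cexp (m * I * x) = if m = 0 then ((2 * π : ℝ) : ℂ) else 0 := by
  rw [integral_Icc_eq_integral_Ioc, ← intervalIntegral.integral_of_le (by linarith [pi_pos])]
  rcases eq_or_ne m 0 with rfl | hm
  · simp [two_mul]
  rw [if_neg hm, integral_exp_mul_complex (by simp [hm, Complex.I_ne_zero])]
  have h_exp_pi : cexp (m * I * π) = cexp (m * I * ((-π : ℝ) : ℂ)) := by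
    rw [Complex.exp_eq_exp_iff_exists_int]
    exact ⟨m, by push_cast; ring⟩
  rw [h_exp_pi, sub_self, zero_div]

section Torus

variable {ι : Type*} [Fintype ι]

theorem setIntegral_univ_pi_prod {𝕜 : Type*} [RCLike 𝕜] (s : ι → Set ℝ) (f : ι → ℝ → 𝕜) :
    ∫ θ in Set.univ.pi s, ∏ i, f i (θ i) = ∏ i, ∫ x in s i, f i x := by
  rw [volume_pi, Measure.restrict_pi_pi]
  exact integral_fintype_prod_eq_prod _

theorem conj_exp_mul_I_pow_mul_exp_mul_I_pow (x : ℝ) (a b : ℕ) :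
    conj (cexp (x * I) ^ a) * cexp (x * I) ^ b = cexp (((b : ℤ) - a : ℤ) * I * x) := by
  rw [map_pow, ← Complex.exp_conj, map_mul, Complex.conj_ofReal, Complex.conj_I,
    ← Complex.exp_nat_mul, ← Complex.exp_nat_mul, ← Complex.exp_add]
  push_cast
  ring_nf

theorem setIntegral_cube_conj_monomial_mul_monomial (a b : ι → ℕ) :
    ∫ θ in Set.univ.pi (fun _ : ι => Set.Icc (-π) π),
        conj (∏ k, cexp (θ k * I) ^ a k) * ∏ k, cexp (θ k * I) ^ b k
      = if a = b then ((2 * π : ℝ) : ℂ) ^ Fintype.card ι else 0 := by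
  simp_rw [map_prod, ← Finset.prod_mul_distrib, conj_exp_mul_I_pow_mul_exp_mul_I_pow]
  rw [setIntegral_univ_pi_prod _ fun k x => cexp (((b k : ℤ) - a k : ℤ) * I * x)]
  simp_rw [integral_Icc_exp_int_mul_I, Fintype.prod_ite_zero, Finset.prod_const,
    Finset.card_univ, sub_eq_zero, Nat.cast_inj, eq_comm (a := b _), funext_iff]

theorem setIntegral_cube_normSq_sum_monomials {α : Type*} [Fintype α] (c : α → ℂ)
    {a : α → ι → ℕ} (ha : Function.Injective a) :
    ∫ θ in Set.univ.pi (fun _ : ι => Set.Icc (-π) π),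
        normSq (∑ j, c j * ∏ k, cexp (θ k * I) ^ a j k)
      = (2 * π) ^ Fintype.card ι * ∑ j, normSq (c j) := by
  classical
  set m : α → (ι → ℝ) → ℂ := fun j θ => ∏ k, cexp (θ k * I) ^ a j k
  have h_expand : ∀ θ, (normSq (∑ j, c j * m j θ) : ℂ)
      = ∑ j, ∑ l, conj (c j) * c l * (conj (m j θ) * m l θ) := fun θ => by
    simp only [Complex.normSq_eq_conj_mul_self, map_sum, map_mul, Finset.sum_mul_sum]
    exact Finset.sum_congr rfl fun _ _ => Finset.sum_congr rfl fun _ _ => by ring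
  have h_int : ∀ j l, Integrable (fun θ => conj (c j) * c l * (conj (m j θ) * m l θ))
      (volume.restrict (Set.univ.pi fun _ : ι => Set.Icc (-π) π)) := fun j l =>
    (Continuous.continuousOn (by fun_prop)).integrableOn_compact
      (isCompact_univ_pi fun _ => isCompact_Icc)
  apply Complex.ofReal_injective
  rw [← integral_complex_ofReal, integral_congr_ae (ae_of_all _ h_expand),
    integral_finsetSum _ fun j _ => integrable_finsetSum _ fun l _ => h_int j l]
  simp_rw [integral_finsetSum _ fun l _ => h_int _ l, integral_const_mul, m,
    setIntegral_cube_conj_monomial_mul_monomial]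
  simp only [ha.eq_iff, mul_ite, mul_zero, Finset.sum_ite_eq, Finset.mem_univ, if_true]
  push_cast
  simp_rw [Complex.normSq_eq_conj_mul_self, Finset.mul_sum, mul_comm]

end Torus

theorem Matrix.det_vandermonde_eq_sum_sign_mul_prod_pow {R : Type*} [CommRing R] {n : ℕ}
    (v : Fin n → R) :
    (vandermonde v).det = ∑ σ : Perm (Fin n), ((σ.sign : ℤ) : R) * ∏ k, v k ^ (σ⁻¹ k : ℕ) := by
  rw [Matrix.det_apply]
  refine Finset.sum_congr rfl fun σ _ => ?_
  rw [Units.smul_def, zsmul_eq_mul, ← Equiv.prod_comp σ fun k => v k ^ (σ⁻¹ k : ℕ)]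
  simp [Matrix.vandermonde_apply]

theorem vdm2_eq_normSq {N : ℕ} (θ : Fin N → ℝ) :
    vdm2 θ = normSq (vandermonde fun k => cexp (θ k * I)).det := by
  rw [Matrix.det_vandermonde, map_prod normSq]
  refine Finset.prod_congr rfl fun i _ => ?_
  rw [map_prod normSq]
  refine Finset.prod_congr rfl fun j _ => ?_
  rw [Complex.sq_norm, ← Complex.normSq_neg, neg_sub]

theorem stmt1_general (N : ℕ) :
    ∫ θ in Set.univ.pi (fun _ : Fin N => Set.Icc (-π) π), vdm2 θ
      = (2 * π) ^ N * (Nat.factorial N : ℝ) := by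
  have h_inj : Function.Injective fun (σ : Perm (Fin N)) (k : Fin N) => (σ⁻¹ k : ℕ) := by
    intro σ τ h
    exact inv_injective <| Equiv.ext fun k => Fin.val_injective (congrFun h k)
  simp_rw [vdm2_eq_normSq, Matrix.det_vandermonde_eq_sum_sign_mul_prod_pow]
  rw [setIntegral_cube_normSq_sum_monomials _ h_inj]
  simp [Complex.normSq_intCast, ← Int.cast_mul, Fintype.card_perm]

/-- For every `N ≥ 1`,
`∫_{[−π,π]^N} ∏_{i<j} |e^{iθ_i} − e^{iθ_j}|² dθ = (2π)^N · N!`. -/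
theorem stmt1 (N : ℕ) (hN : 1 ≤ N) :
    ∫ θ in Set.univ.pi (fun _ : Fin N => Set.Icc (-π) π), vdm2 θ
      = (2 * π) ^ N * (Nat.factorial N : ℝ) :=
  stmt1_general N
end

section
/- (Heine identity for Toeplitz integrals.) Let N ≥ 1 and let f : ℝ → ℂ be 2π-periodic and integrable on [−π,π]. Then ∫_{[−π,π]^N} (∏_{k=1}^N f(θ_k)) · ∏_{1≤i<j≤N} |e^{iθ_i} − e^{iθ_j}|² dθ_1⋯dθ_N = (2π)^N · N! · det( t_{j−k} )_{1≤j,k≤N}, where t_m = (1/2π) ∫_{−π}^{π} f(θ) e^{−imθ} dθ is the m-th Fourier coefficient of f. -/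
open MeasureTheory Real

/-- The `m`-th Fourier coefficient of the symbol `f`:
`t_m = (1/2π) ∫_{−π}^{π} f(θ) e^{−imθ} dθ`. -/
noncomputable def toepCoeff (f : ℝ → ℂ) (m : ℤ) : ℂ :=
  ((2 * π : ℝ) : ℂ)⁻¹ * ∫ θ in (-π)..π, f θ * Complex.exp (-(m : ℂ) * Complex.I * (θ : ℂ))

/-!
Since `Δ(θ) = |det V|²` for the Vandermonde matrix `V = (e^{ijθ_k})`, the integrand is
`det (f(θ_k) e^{-ijθ_k}) · det (e^{ijθ_k})`. Andréief's identity
`∫ det (φ_j(x_k)) det (ψ_j(x_k)) dμ^N = N! det (∫ φ_j ψ_k dμ)` then turns the integral into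
`N! det (2π t_{j-k})`: expand both determinants, integrate each of the `(N!)²` product terms by
Fubini, and note that the `(σ, τ)` term only depends on `τ σ⁻¹`.
-/

open Matrix Complex ComplexConjugate
open Equiv (Perm)

namespace Matrix

variable {ι R : Type*} [Fintype ι] [DecidableEq ι] [CommRing R]

theorem det_mul_det_eq_sum_sum (A B : Matrix ι ι R) :
    A.det * B.det = ∑ σ : Perm ι, ∑ τ : Perm ι,
      Perm.sign σ • Perm.sign τ • ∏ k, A (σ k) k * B (τ k) k := by
  simp only [det_apply, Finset.sum_mul_sum, Finset.prod_mul_distrib, smul_mul_smul_comm, smul_smul]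

theorem sum_sum_sign_smul_prod (G : Matrix ι ι R) :
    ∑ σ : Perm ι, ∑ τ : Perm ι, Perm.sign σ • Perm.sign τ • ∏ k, G (σ k) (τ k)
      = (Fintype.card ι).factorial * G.det := by
  have row_perm (σ : Perm ι) :
      ∑ τ : Perm ι, Perm.sign τ • ∏ k, G (σ k) (τ k) = Perm.sign σ • G.det := by
    rw [Units.smul_def, zsmul_eq_mul, ← det_permute, ← det_transpose, det_apply]
    rfl
  simp_rw [← Finset.smul_sum, row_perm, smul_smul, Int.units_mul_self, one_smul]
  rw [Finset.sum_const, Finset.card_univ, Fintype.card_perm, nsmul_eq_mul]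

end Matrix

theorem integral_det_mul_det {ι α 𝕜 : Type*} [Fintype ι] [DecidableEq ι] [RCLike 𝕜]
    [MeasurableSpace α] (μ : Measure α) [SigmaFinite μ] (φ ψ : ι → α → 𝕜)
    (hφψ : ∀ j k, Integrable (fun y => φ j y * ψ k y) μ) :
    ∫ x, (of fun j k => φ j (x k)).det * (of fun j k => ψ j (x k)).det ∂(Measure.pi fun _ => μ)
      = (Fintype.card ι).factorial * (of fun j k => ∫ y, φ j y * ψ k y ∂μ).det := by
  have hterm (σ τ : Perm ι) : Integrable (fun x : ι → α =>
      Perm.sign σ • Perm.sign τ • ∏ k, φ (σ k) (x k) * ψ (τ k) (x k)) (Measure.pi fun _ => μ) :=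
    ((Integrable.fintype_prod fun k => hφψ (σ k) (τ k)).smul _).smul _
  simp_rw [det_mul_det_eq_sum_sum, ← sum_sum_sign_smul_prod, of_apply]
  rw [integral_finsetSum _ fun σ _ => integrable_finsetSum _ fun τ _ => hterm σ τ]
  refine Finset.sum_congr rfl fun σ _ => ?_
  rw [integral_finsetSum _ fun τ _ => hterm σ τ]
  refine Finset.sum_congr rfl fun τ _ => ?_
  simp only [Units.smul_def, zsmul_eq_mul]
  rw [integral_const_mul, integral_const_mul,
    integral_fintype_prod_eq_prod (fun k y => φ (σ k) y * ψ (τ k) y)]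

theorem norm_det_vandermonde_sq {K : Type*} [NormedField K] {N : ℕ} (v : Fin N → K) :
    ‖(vandermonde v).det‖ ^ 2 = ∏ i : Fin N, ∏ j ∈ Finset.Ioi i, ‖v i - v j‖ ^ 2 := by
  simp only [det_vandermonde, norm_prod, Finset.prod_pow, norm_sub_rev]

theorem vdm2_eq_norm_det_sq {N : ℕ} (θ : Fin N → ℝ) :
    vdm2 θ = ‖(of fun j k : Fin N => exp (θ k * I) ^ (j : ℕ)).det‖ ^ 2 := by
  rw [vdm2, ← norm_det_vandermonde_sq, ← det_transpose]
  rfl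

theorem conj_exp_ofReal_mul_I (x : ℝ) : conj (exp (x * I)) = exp (-x * I) := by
  rw [← exp_conj, map_mul, conj_ofReal, conj_I, mul_neg, neg_mul]

theorem prod_mul_vdm2_eq_det_mul_det {N : ℕ} (f : ℝ → ℂ) (θ : Fin N → ℝ) :
    (∏ k, f (θ k)) * (vdm2 θ : ℂ)
      = (of fun j k : Fin N => f (θ k) * exp (-θ k * I) ^ (j : ℕ)).det
        * (of fun j k : Fin N => exp (θ k * I) ^ (j : ℕ)).det := by
  have conj_det : conj (of fun j k : Fin N => exp (θ k * I) ^ (j : ℕ)).det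
      = (of fun j k : Fin N => exp (-θ k * I) ^ (j : ℕ)).det := by
    rw [RingHom.map_det, RingHom.mapMatrix_apply]
    congr 1
    ext j k
    simp only [map_apply, of_apply, map_pow, conj_exp_ofReal_mul_I]
  rw [vdm2_eq_norm_det_sq, ofReal_pow, ← conj_mul', conj_det, ← mul_assoc, ← det_mul_row]
  rfl

theorem exp_neg_pow_mul_exp_pow (x : ℝ) (j k : ℕ) :
    exp (-x * I) ^ j * exp (x * I) ^ k = exp (-((j : ℤ) - (k : ℤ) : ℤ) * I * x) := by
  rw [← Complex.exp_nat_mul, ← Complex.exp_nat_mul, ← Complex.exp_add]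
  push_cast
  ring_nf

theorem setIntegral_Icc_mul_exp_pow_eq_toepCoeff (f : ℝ → ℂ) (j k : ℕ) :
    ∫ x in Set.Icc (-π) π, f x * exp (-x * I) ^ j * exp (x * I) ^ k
      = (2 * π : ℝ) * toepCoeff f ((j : ℤ) - (k : ℤ)) := by
  simp_rw [mul_assoc, exp_neg_pow_mul_exp_pow]
  rw [integral_Icc_eq_integral_Ioc, ← intervalIntegral.integral_of_le (by linarith [pi_pos]),
    toepCoeff, ← mul_assoc, mul_inv_cancel₀ (by exact_mod_cast two_pi_pos.ne'), one_mul]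

theorem integrableOn_Icc_mul_exp_pow (f : ℝ → ℂ) (hf : IntegrableOn f (Set.Icc (-π) π))
    (j k : ℕ) : IntegrableOn (fun x => f x * exp (-x * I) ^ j * exp (x * I) ^ k) (Set.Icc (-π) π) :=
  (hf.mul_continuousOn (by fun_prop) isCompact_Icc).mul_continuousOn (by fun_prop) isCompact_Icc

theorem stmt2_general (N : ℕ) (f : ℝ → ℂ)
    (hint : IntegrableOn f (Set.Icc (-π) π)) :
    ∫ θ in Set.univ.pi (fun _ : Fin N => Set.Icc (-π) π),
        (∏ k : Fin N, f (θ k)) * ((vdm2 θ : ℝ) : ℂ)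
      = (((2 * π) ^ N * (Nat.factorial N : ℝ) : ℝ) : ℂ) *
        Matrix.det (Matrix.of fun j k : Fin N => toepCoeff f ((j.val : ℤ) - (k.val : ℤ))) := by
  calc ∫ θ in Set.univ.pi (fun _ : Fin N => Set.Icc (-π) π),
        (∏ k : Fin N, f (θ k)) * ((vdm2 θ : ℝ) : ℂ)
      = ∫ θ, (of fun j k : Fin N => f (θ k) * exp (-θ k * I) ^ (j : ℕ)).det
          * (of fun j k : Fin N => exp (θ k * I) ^ (j : ℕ)).det
          ∂(Measure.pi fun _ => volume.restrict (Set.Icc (-π) π)) := by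
        simp_rw [volume_pi, Measure.restrict_pi_pi, prod_mul_vdm2_eq_det_mul_det]
    _ = N.factorial * (of fun j k : Fin N =>
          ∫ x in Set.Icc (-π) π, f x * exp (-x * I) ^ (j : ℕ) * exp (x * I) ^ (k : ℕ)).det := by
        rw [integral_det_mul_det _ _ _ fun (j k : Fin N) => integrableOn_Icc_mul_exp_pow f hint j k,
          Fintype.card_fin]
    _ = _ := by
        simp_rw [setIntegral_Icc_mul_exp_pow_eq_toepCoeff]
        rw [show (of fun j k : Fin N => ((2 * π : ℝ) : ℂ) * toepCoeff f ((j : ℤ) - (k : ℤ)))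
            = ((2 * π : ℝ) : ℂ) • of fun j k : Fin N => toepCoeff f ((j : ℤ) - (k : ℤ)) from rfl,
          det_smul, Fintype.card_fin]
        push_cast
        ring

/-- Heine identity for Toeplitz integrals: for `N ≥ 1` and `f : ℝ → ℂ`
`2π`-periodic and integrable on `[−π,π]`,
`∫_{[−π,π]^N} (∏_k f(θ_k)) ∏_{i<j} |e^{iθ_i} − e^{iθ_j}|² dθ = (2π)^N N! det(t_{j−k})_{1≤j,k≤N}`. -/
theorem stmt2 (N : ℕ) (hN : 1 ≤ N) (f : ℝ → ℂ)
    (hper : Function.Periodic f (2 * π))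
    (hint : IntegrableOn f (Set.Icc (-π) π)) :
    ∫ θ in Set.univ.pi (fun _ : Fin N => Set.Icc (-π) π),
        (∏ k : Fin N, f (θ k)) * ((vdm2 θ : ℝ) : ℂ)
      = (((2 * π) ^ N * (Nat.factorial N : ℝ) : ℝ) : ℂ) *
        Matrix.det (Matrix.of fun j k : Fin N => toepCoeff f ((j.val : ℤ) - (k.val : ℤ))) :=
  stmt2_general N f hint
end

section
/- Let N ≥ 1, R ≥ 0, and real numbers 0 ≤ b_0 < a_1 < b_1 < a_2 < ⋯ < a_R < b_R ≤ π. Set I = [−b_0,b_0] ∪ ⋃_{r=1}^R ([a_r,b_r] ∪ [−b_r,−a_r]). Then ((2π)^N N!)^{-1} ∫_{I^N} ∏_{1≤i<j≤N} |e^{iθ_i} − e^{iθ_j}|² dθ_1⋯dθ_N = det C, where C is the N×N matrix with entries C_{i,j} = (b_0/π)·sinc((j−i)b_0) + Σ_{r=1}^R [ (b_r/π)·sinc((j−i)b_r) − (a_r/π)·sinc((j−i)a_r) ]. -/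
open MeasureTheory Real

/-- The cardinal sine: `sinc x = sin x / x` for `x ≠ 0`, and `sinc 0 = 1`. -/
noncomputable def sinc (x : ℝ) : ℝ := if x = 0 then 1 else Real.sin x / x

/-!
Expanding `|det V|²` for the Vandermonde matrix `V = (e^{i p θ_k})_{k,p}` as a double sum over
permutations and integrating term by term against a product measure `μ^N` gives Heine's identity
`∫ Δ dμ^N = N! det (μ̂(p - q))_{p,q}` with `μ̂(c) = ∫ e^{ict} dμ`. For Lebesgue measure on the
symmetric set `I`, `μ̂` is real: summing `∫_{-v}^{v} e^{ict} dt = 2 v sinc(c v)` over the bands of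
`I` gives `μ̂(c) = 2π C(c)`, where `C(j - i)` is the `(i, j)` entry of the matrix of the theorem.
-/

open Complex Matrix ComplexConjugate
open Equiv (Perm)

noncomputable def expMulI (c t : ℝ) : ℂ := Complex.exp (c * I * t)

lemma continuous_expMulI (c : ℝ) : Continuous (expMulI c) := by
  unfold expMulI; fun_prop

lemma norm_expMulI (c t : ℝ) : ‖expMulI c t‖ = 1 := by
  rw [expMulI, show (c : ℂ) * I * t = ((c * t : ℝ) : ℂ) * I by push_cast; ring,
    norm_exp_ofReal_mul_I]

lemma integrable_expMulI (μ : Measure ℝ) [IsFiniteMeasure μ] (c : ℝ) :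
    Integrable (expMulI c) μ :=
  .of_bound (continuous_expMulI c).aestronglyMeasurable 1
    (.of_forall fun t => (norm_expMulI c t).le)

lemma exp_pow_mul_conj_exp_pow (t : ℝ) (p q : ℕ) :
    Complex.exp (t * I) ^ p * conj (Complex.exp (t * I)) ^ q = expMulI (p - q) t := by
  rw [← Complex.exp_conj, map_mul, conj_I, conj_ofReal, ← Complex.exp_nat_mul,
    ← Complex.exp_nat_mul, ← Complex.exp_add, expMulI]
  push_cast
  ring_nf

lemma det_vandermonde_eq_sum_perm {R : Type*} [CommRing R] {n : ℕ} (v : Fin n → R) :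
    (vandermonde v).det = ∑ σ : Perm (Fin n), (Perm.sign σ : ℤ) * ∏ i, v i ^ (σ i : ℕ) := by
  rw [← det_transpose, det_apply']
  rfl

lemma vdm2_eq_norm_det_vandermonde_sq {N : ℕ} (θ : Fin N → ℝ) :
    vdm2 θ = ‖(vandermonde fun k => Complex.exp (θ k * I)).det‖ ^ 2 := by
  simp only [vdm2, det_vandermonde, norm_prod, Finset.prod_pow, norm_sub_rev]

lemma vdm2_eq_sum_perm_perm {N : ℕ} (θ : Fin N → ℝ) :
    (vdm2 θ : ℂ) = ∑ σ : Perm (Fin N), ∑ τ : Perm (Fin N),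
      (Perm.sign σ : ℤ) * (Perm.sign τ : ℤ) * ∏ k, expMulI ((σ k : ℕ) - (τ k : ℕ)) (θ k) := by
  rw [vdm2_eq_norm_det_vandermonde_sq, ofReal_pow, ← mul_conj',
    det_vandermonde_eq_sum_perm, map_sum, Finset.sum_mul_sum]
  refine Finset.sum_congr rfl fun σ _ => Finset.sum_congr rfl fun τ _ => ?_
  simp only [map_mul, map_intCast, map_prod, map_pow, ← exp_pow_mul_conj_exp_pow,
    Finset.prod_mul_distrib]
  ring

lemma sum_perm_sum_perm_sign_mul_prod {R : Type*} [CommRing R] {n : Type*} [Fintype n]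
    [DecidableEq n] (M : Matrix n n R) :
    ∑ σ : Perm n, ∑ τ : Perm n, (Perm.sign σ : ℤ) * (Perm.sign τ : ℤ) * ∏ k, M (σ k) (τ k)
      = (Fintype.card n).factorial * M.det := by
  have h : ∀ τ : Perm n,
      ∑ σ : Perm n, (Perm.sign σ : ℤ) * (Perm.sign τ : ℤ) * ∏ k, M (σ k) (τ k) = M.det := by
    intro τ
    rw [det_apply', ← Equiv.sum_comp (Equiv.mulRight τ)]
    refine Finset.sum_congr rfl fun ρ _ => ?_
    have hprod : ∏ k, M ((ρ * τ) k) (τ k) = ∏ i, M (ρ i) i :=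
      Equiv.prod_comp τ fun i => M (ρ i) i
    simp only [Equiv.coe_mulRight, hprod, Perm.sign_mul, Units.val_mul, Int.cast_mul]
    rw [mul_assoc ((Perm.sign ρ : ℤ) : R), ← Int.cast_mul, ← Units.val_mul, Int.units_mul_self]
    simp
  rw [Finset.sum_comm, Finset.sum_congr rfl fun τ _ => h τ, Finset.sum_const, Finset.card_univ,
    Fintype.card_perm, nsmul_eq_mul]

theorem integral_vdm2_pi_eq_factorial_mul_det (μ : Measure ℝ) [IsFiniteMeasure μ] (N : ℕ) :
    ((∫ θ, vdm2 θ ∂Measure.pi fun _ : Fin N => μ : ℝ) : ℂ)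
      = N.factorial * (of fun p q : Fin N => ∫ t, expMulI ((p : ℕ) - (q : ℕ)) t ∂μ).det := by
  have hint : ∀ σ τ : Perm (Fin N), Integrable (fun θ : Fin N → ℝ =>
      ∏ k, expMulI ((σ k : ℕ) - (τ k : ℕ)) (θ k)) (Measure.pi fun _ => μ) :=
    fun σ τ => .fintype_prod fun k => integrable_expMulI μ _
  rw [← integral_complex_ofReal]
  simp_rw [vdm2_eq_sum_perm_perm]
  rw [integral_finsetSum _ fun σ _ => integrable_finsetSum _ fun τ _ => (hint σ τ).const_mul _]
  simp_rw [integral_finsetSum _ fun τ _ => (hint _ τ).const_mul _, integral_const_mul,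
    integral_fintype_prod_eq_prod]
  simpa using sum_perm_sum_perm_sign_mul_prod
    (of fun p q : Fin N => ∫ t, expMulI ((p : ℕ) - (q : ℕ)) t ∂μ)

theorem integral_vdm2_pi_eq_det_toeplitz (μ : Measure ℝ) [IsFiniteMeasure μ] (N : ℕ) (g : ℝ → ℝ)
    (hg : ∀ c, ∫ t, expMulI c t ∂μ = ((2 * π * g c : ℝ) : ℂ)) :
    ((2 * π) ^ N * (N.factorial : ℝ))⁻¹ * ∫ θ, vdm2 θ ∂Measure.pi (fun _ : Fin N => μ)
      = (of fun i j : Fin N => g ((j : ℕ) - (i : ℕ))).det := by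
  set C : Matrix (Fin N) (Fin N) ℝ := of fun i j => g ((j : ℕ) - (i : ℕ))
  have hM : (of fun p q : Fin N => ∫ t, expMulI ((p : ℕ) - (q : ℕ)) t ∂μ)
      = ((2 * π : ℝ) : ℂ) • (Complex.ofRealHom.mapMatrix C)ᵀ := by
    ext p q
    simp [C, hg]
  have h := integral_vdm2_pi_eq_factorial_mul_det μ N
  rw [hM, det_smul, det_transpose, ← RingHom.map_det, Fintype.card_fin, ofRealHom_eq_coe] at h
  have h2π : (2 * π) ^ N ≠ 0 := pow_ne_zero _ (by positivity)
  rw [inv_mul_eq_iff_eq_mul₀ (mul_ne_zero h2π (Nat.cast_ne_zero.mpr N.factorial_ne_zero))]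
  refine Complex.ofReal_injective (h.trans ?_)
  push_cast
  ring

lemma mul_sinc_mul {c : ℝ} (hc : c ≠ 0) (x : ℝ) :
    x * _root_.sinc (c * x) = Real.sin (c * x) / c := by
  rcases eq_or_ne x 0 with rfl | hx
  · simp
  · rw [_root_.sinc, if_neg (mul_ne_zero hc hx)]
    field_simp

lemma intervalIntegral_expMulI_neg_self (c v : ℝ) :
    ∫ t in -v..v, expMulI c t = ((2 * v * _root_.sinc (c * v) : ℝ) : ℂ) := by
  rcases eq_or_ne c 0 with rfl | hc
  · simp [expMulI, _root_.sinc]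
    ring
  have hcI : (c : ℂ) * I ≠ 0 := mul_ne_zero (ofReal_ne_zero.mpr hc) I_ne_zero
  have euler : ∀ x : ℝ,
      Complex.exp (c * I * x) = Complex.cos (c * x) + Complex.sin (c * x) * I := fun x => by
    rw [← Complex.exp_mul_I]; ring_nf
  simp only [expMulI]
  rw [integral_exp_mul_complex hcI, euler, euler, mul_assoc, mul_sinc_mul hc]
  push_cast
  simp only [mul_neg, Complex.cos_neg, Complex.sin_neg]
  field_simp
  ring

lemma setIntegral_expMulI_Icc_neg_self (c : ℝ) {v : ℝ} (hv : 0 ≤ v) :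
    ∫ t in Set.Icc (-v) v, expMulI c t = ((2 * v * _root_.sinc (c * v) : ℝ) : ℂ) := by
  rw [integral_Icc_eq_integral_Ioc, ← intervalIntegral.integral_of_le (by linarith),
    intervalIntegral_expMulI_neg_self]

lemma disjoint_Icc_Icc_neg {a b : ℝ} (ha : 0 < a) : Disjoint (Set.Icc a b) (Set.Icc (-b) (-a)) :=
  Set.disjoint_left.mpr fun _ h h' => by linarith [h.1, h'.2]

lemma setIntegral_expMulI_Icc_union_Icc_neg (c : ℝ) {a b : ℝ} (ha : 0 < a) (hab : a ≤ b) :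
    ∫ t in Set.Icc a b ∪ Set.Icc (-b) (-a), expMulI c t
      = ((2 * (b * _root_.sinc (c * b) - a * _root_.sinc (c * a)) : ℝ) : ℂ) := by
  have hii : ∀ p q, IntervalIntegrable (expMulI c) volume p q :=
    (continuous_expMulI c).intervalIntegrable
  rw [setIntegral_union (disjoint_Icc_Icc_neg ha) measurableSet_Icc
      (continuous_expMulI c).integrableOn_Icc (continuous_expMulI c).integrableOn_Icc,
    integral_Icc_eq_integral_Ioc, integral_Icc_eq_integral_Ioc,
    ← intervalIntegral.integral_of_le hab, ← intervalIntegral.integral_of_le (by linarith)]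
  have hsplit_b := intervalIntegral.integral_add_adjacent_intervals (hii (-b) (-a)) (hii (-a) b)
  have hsplit_a := intervalIntegral.integral_add_adjacent_intervals (hii (-a) a) (hii a b)
  rw [intervalIntegral_expMulI_neg_self, ← hsplit_a, intervalIntegral_expMulI_neg_self] at hsplit_b
  push_cast at hsplit_b ⊢
  linear_combination hsplit_b

lemma disjoint_Icc_union_Icc_neg {a b a' b' : ℝ} (ha : 0 < a) (h : b < a') :
    Disjoint (Set.Icc a b ∪ Set.Icc (-b) (-a)) (Set.Icc a' b' ∪ Set.Icc (-b') (-a')) := by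
  simp only [Set.disjoint_left, Set.mem_union, Set.mem_Icc]
  rintro x (⟨h1, h2⟩ | ⟨h1, h2⟩) (⟨h3, h4⟩ | ⟨h3, h4⟩) <;> linarith

lemma disjoint_Icc_neg_Icc_union {v a b : ℝ} (h : v < a) :
    Disjoint (Set.Icc (-v) v) (Set.Icc a b ∪ Set.Icc (-b) (-a)) := by
  simp only [Set.disjoint_left, Set.mem_union, Set.mem_Icc]
  rintro x ⟨h1, h2⟩ (⟨h3, h4⟩ | ⟨h3, h4⟩) <;> linarith

lemma setIntegral_expMulI_bands {R : ℕ} {b0 : ℝ} {a b : Fin R → ℝ} (hb0 : 0 ≤ b0)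
    (hb0a : ∀ r, b0 < a r) (hab : ∀ r, a r < b r) (hchain : ∀ r s, r < s → b r < a s) (c : ℝ) :
    ∫ t in Set.Icc (-b0) b0 ∪ ⋃ r, (Set.Icc (a r) (b r) ∪ Set.Icc (-(b r)) (-(a r))), expMulI c t
      = ((2 * (b0 * _root_.sinc (c * b0) +
          ∑ r, (b r * _root_.sinc (c * b r) - a r * _root_.sinc (c * a r))) : ℝ) : ℂ) := by
  have ha : ∀ r, 0 < a r := fun r => hb0.trans_lt (hb0a r)
  have hmeas : ∀ r, MeasurableSet (Set.Icc (a r) (b r) ∪ Set.Icc (-(b r)) (-(a r))) :=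
    fun r => measurableSet_Icc.union measurableSet_Icc
  have hint : IntegrableOn (expMulI c)
      (⋃ r, (Set.Icc (a r) (b r) ∪ Set.Icc (-(b r)) (-(a r)))) :=
    (continuous_expMulI c).continuousOn.integrableOn_compact
      (isCompact_iUnion fun r => isCompact_Icc.union isCompact_Icc)
  have hdisj : Pairwise (Function.onFun Disjoint
      fun r => Set.Icc (a r) (b r) ∪ Set.Icc (-(b r)) (-(a r))) :=
    (pairwise_disjoint_on _).mpr fun r s hrs => disjoint_Icc_union_Icc_neg (ha r) (hchain r s hrs)
  rw [setIntegral_union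
      (Set.disjoint_iUnion_right.mpr fun r => disjoint_Icc_neg_Icc_union (hb0a r)) (.iUnion hmeas)
      (continuous_expMulI c).integrableOn_Icc hint,
    integral_iUnion hmeas hdisj hint, tsum_fintype, setIntegral_expMulI_Icc_neg_self c hb0]
  simp only [fun r => setIntegral_expMulI_Icc_union_Icc_neg c (ha r) (hab r).le]
  push_cast
  rw [mul_add, Finset.mul_sum]
  ring

theorem stmt4_general (N : ℕ) (R : ℕ) (b0 : ℝ) (a b : Fin R → ℝ)
    (hb0 : 0 ≤ b0)
    (hb0a : ∀ r : Fin R, b0 < a r)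
    (hab : ∀ r : Fin R, a r < b r)
    (hchain : ∀ r s : Fin R, r < s → b r < a s) :
    ((2 * π) ^ N * (Nat.factorial N : ℝ))⁻¹ *
        ∫ θ in Set.univ.pi (fun _ : Fin N =>
            Set.Icc (-b0) b0 ∪ ⋃ r : Fin R, (Set.Icc (a r) (b r) ∪ Set.Icc (-(b r)) (-(a r)))),
          vdm2 θ
      = Matrix.det (Matrix.of fun i j : Fin N =>
          (b0 / π) * _root_.sinc (((j.val : ℝ) - (i.val : ℝ)) * b0) +
          ∑ r : Fin R,
            ((b r / π) * _root_.sinc (((j.val : ℝ) - (i.val : ℝ)) * b r) -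
             (a r / π) * _root_.sinc (((j.val : ℝ) - (i.val : ℝ)) * a r))) := by
  set I := Set.Icc (-b0) b0 ∪ ⋃ r : Fin R, (Set.Icc (a r) (b r) ∪ Set.Icc (-(b r)) (-(a r)))
  have hI : IsCompact I :=
    isCompact_Icc.union (isCompact_iUnion fun r => isCompact_Icc.union isCompact_Icc)
  have : IsFiniteMeasure (volume.restrict I) := isFiniteMeasure_restrict.mpr hI.measure_lt_top.ne
  rw [volume_pi, Measure.restrict_pi_pi]
  refine integral_vdm2_pi_eq_det_toeplitz (volume.restrict I) N
    (fun c => (b0 / π) * _root_.sinc (c * b0) +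
      ∑ r, ((b r / π) * _root_.sinc (c * b r) - (a r / π) * _root_.sinc (c * a r)))
    fun c => ?_
  rw [setIntegral_expMulI_bands hb0 hb0a hab hchain c]
  congr 1
  simp only [Finset.mul_sum, mul_add, mul_sub]
  field_simp

/-- For `N ≥ 1`, `R ≥ 0`, and `0 ≤ b_0 < a_1 < b_1 < ⋯ < a_R < b_R ≤ π`, with
`I = [−b_0,b_0] ∪ ⋃_{r=1}^R ([a_r,b_r] ∪ [−b_r,−a_r])`, one has
`((2π)^N N!)⁻¹ ∫_{I^N} ∏_{i<j} |e^{iθ_i} − e^{iθ_j}|² dθ = det C` with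
`C_{i,j} = (b_0/π) sinc((j−i)b_0) + Σ_r [(b_r/π) sinc((j−i)b_r) − (a_r/π) sinc((j−i)a_r)]`. -/
theorem stmt4 (N : ℕ) (hN : 1 ≤ N) (R : ℕ) (b0 : ℝ) (a b : Fin R → ℝ)
    (hb0 : 0 ≤ b0) (hb0π : b0 ≤ π)
    (hb0a : ∀ r : Fin R, b0 < a r)
    (hab : ∀ r : Fin R, a r < b r)
    (hchain : ∀ r s : Fin R, r < s → b r < a s)
    (hbπ : ∀ r : Fin R, b r ≤ π) :
    ((2 * π) ^ N * (Nat.factorial N : ℝ))⁻¹ *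
        ∫ θ in Set.univ.pi (fun _ : Fin N =>
            Set.Icc (-b0) b0 ∪ ⋃ r : Fin R, (Set.Icc (a r) (b r) ∪ Set.Icc (-(b r)) (-(a r)))),
          vdm2 θ
      = Matrix.det (Matrix.of fun i j : Fin N =>
          (b0 / π) * _root_.sinc (((j.val : ℝ) - (i.val : ℝ)) * b0) +
          ∑ r : Fin R,
            ((b r / π) * _root_.sinc (((j.val : ℝ) - (i.val : ℝ)) * b r) -
             (a r / π) * _root_.sinc (((j.val : ℝ) - (i.val : ℝ)) * a r))) :=
  stmt4_general N R b0 a b hb0 hb0a hab hchain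
end

section
/- Let N ≥ 1 and 0 ≤ a < π. Then ∫_{[−a,a]^N} ( Σ_{i=1}^N 1/(1 + e^{iθ_i}) ) · ∏_{1≤i<j≤N} |e^{iθ_i} − e^{iθ_j}|² dθ_1⋯dθ_N = (N/2) · ∫_{[−a,a]^N} ∏_{1≤i<j≤N} |e^{iθ_i} − e^{iθ_j}|² dθ_1⋯dθ_N, where both sides are complex numbers (in particular the left-hand side is real). -/
/-!
Pair each configuration `θ` with its reflection `-θ`. The cube `[-a, a]^N` and Lebesgue measure
are invariant under `θ ↦ -θ`, and so is `Δ`, since reflecting conjugates every `e^{iθ_k}`.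
Since `1/(1 + z) + 1/(1 + z⁻¹) = 1`, the integrand plus its reflection is `N Δ(θ)`,
so twice the left-hand side is `N ∫ Δ`.
-/

open MeasureTheory Real

section Symmetrization

variable {G E : Type*} [MeasurableSpace G] [AddGroup G] [MeasurableNeg G]
  [NormedAddCommGroup E] [NormedSpace ℝ E] {μ : Measure G} [μ.IsNegInvariant] {S : Set G}

theorem setIntegral_comp_neg_of_neg_eq (hS : -S = S) (f : G → E) :
    ∫ x in S, f (-x) ∂μ = ∫ x in S, f x ∂μ := by
  have := (Measure.measurePreserving_neg μ).setIntegral_preimage_emb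
    (MeasurableEquiv.neg G).measurableEmbedding f S
  rwa [Set.neg_preimage, hS] at this

theorem two_nsmul_setIntegral_eq_of_add_comp_neg (hSm : MeasurableSet S) (hS : -S = S)
    {f g : G → E} (hf : IntegrableOn f S μ) (hfg : ∀ x ∈ S, f x + f (-x) = g x) :
    2 • ∫ x in S, f x ∂μ = ∫ x in S, g x ∂μ := by
  have hf_neg : IntegrableOn (fun x => f (-x)) S μ := hS ▸ hf.comp_neg
  calc 2 • ∫ x in S, f x ∂μ = ∫ x in S, f x ∂μ + ∫ x in S, f (-x) ∂μ := by
        rw [setIntegral_comp_neg_of_neg_eq hS, two_nsmul]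
    _ = ∫ x in S, g x ∂μ := by
        rw [← integral_add hf hf_neg]
        exact setIntegral_congr_fun hSm hfg

end Symmetrization

theorem inv_one_add_add_inv_one_add_inv {K : Type*} [Field K] {z : K} (hz : 1 + z ≠ 0)
    (hz₀ : z ≠ 0) : (1 + z)⁻¹ + (1 + z⁻¹)⁻¹ = 1 := by
  have : 1 + z⁻¹ = (1 + z) / z := by field_simp; ring
  rw [this, inv_div]
  field_simp

theorem Complex.one_add_exp_ofReal_mul_I_ne_zero {θ : ℝ} (h : |θ| < π) :
    1 + exp (θ * I) ≠ 0 := by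
  intro h0
  have harg : arg (exp (θ * I)) = π := by rw [eq_neg_of_add_eq_zero_right h0, arg_neg_one]
  rw [arg_exp_mul_I, (toIocMod_eq_self two_pi_pos).2
    ⟨by linarith [neg_abs_le θ], by linarith [le_abs_self θ]⟩] at harg
  linarith [le_abs_self θ]

theorem Complex.inv_one_add_exp_add_inv_one_add_exp_neg {θ : ℝ} (h : |θ| < π) :
    (1 + exp (θ * I))⁻¹ + (1 + exp (((-θ : ℝ) : ℂ) * I))⁻¹ = 1 := by
  rw [ofReal_neg, neg_mul, exp_neg]
  exact inv_one_add_add_inv_one_add_inv (one_add_exp_ofReal_mul_I_ne_zero h) (exp_ne_zero _)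

theorem vdm2_neg {N : ℕ} (θ : Fin N → ℝ) : vdm2 (-θ) = vdm2 θ := by
  have exp_neg_eq_conj (x : ℝ) : Complex.exp (((-x : ℝ) : ℂ) * Complex.I)
      = starRingEnd ℂ (Complex.exp (x * Complex.I)) := by
    rw [← Complex.exp_conj, map_mul, Complex.conj_ofReal, Complex.conj_I, Complex.ofReal_neg,
      neg_mul, mul_neg]
  unfold vdm2
  refine Finset.prod_congr rfl fun i _ => Finset.prod_congr rfl fun j _ => ?_
  rw [Pi.neg_apply, Pi.neg_apply, exp_neg_eq_conj, exp_neg_eq_conj, ← map_sub, Complex.norm_conj]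

theorem continuous_vdm2 {N : ℕ} : Continuous (vdm2 (N := N)) := by
  unfold vdm2
  fun_prop

theorem sum_inv_one_add_exp_add_sum_neg {N : ℕ} {θ : Fin N → ℝ} (h : ∀ i, |θ i| < π) :
    ∑ i, (1 + Complex.exp ((θ i : ℂ) * Complex.I))⁻¹
      + ∑ i, (1 + Complex.exp (((-θ) i : ℂ) * Complex.I))⁻¹ = N := by
  rw [← Finset.sum_add_distrib]
  calc _ = ∑ _i : Fin N, (1 : ℂ) :=
        Finset.sum_congr rfl fun i _ => Complex.inv_one_add_exp_add_inv_one_add_exp_neg (h i)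
    _ = N := by simp

theorem stmt14_general (N : ℕ) (a : ℝ) (haπ : a < π) :
    ∫ θ in Set.univ.pi (fun _ : Fin N => Set.Icc (-a) a),
        (∑ i : Fin N, (1 + Complex.exp ((θ i : ℂ) * Complex.I))⁻¹) * ((vdm2 θ : ℝ) : ℂ)
      = ((N : ℂ) / 2) *
        (((∫ θ in Set.univ.pi (fun _ : Fin N => Set.Icc (-a) a), vdm2 θ) : ℝ) : ℂ) := by
  set S := Set.univ.pi (fun _ : Fin N => Set.Icc (-a) a)
  have hS : -S = S := by simp only [S, Set.neg_pi, Set.neg_Icc, neg_neg]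
  have hθ : ∀ θ ∈ S, ∀ i, |θ i| < π := fun θ hθ i =>
    abs_lt.2 ⟨by linarith [(hθ i trivial).1], by linarith [(hθ i trivial).2]⟩
  have hint : IntegrableOn
      (fun θ => (∑ i : Fin N, (1 + Complex.exp ((θ i : ℂ) * Complex.I))⁻¹) * ((vdm2 θ : ℝ) : ℂ))
      S :=
    ContinuousOn.integrableOn_compact (isCompact_univ_pi fun _ => isCompact_Icc) <|
      (continuousOn_finsetSum _ fun i _ => ContinuousOn.inv₀ (by fun_prop)
        fun θ h => Complex.one_add_exp_ofReal_mul_I_ne_zero (hθ θ h i)).mul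
      (Complex.continuous_ofReal.comp continuous_vdm2).continuousOn
  have hsymm := two_nsmul_setIntegral_eq_of_add_comp_neg
    (MeasurableSet.univ_pi fun _ => measurableSet_Icc) hS hint
    (g := fun θ => (N : ℂ) * ((vdm2 θ : ℝ) : ℂ)) fun θ h => by
      rw [vdm2_neg, ← add_mul, sum_inv_one_add_exp_add_sum_neg (hθ θ h)]
  rw [integral_const_mul, integral_complex_ofReal, nsmul_eq_mul] at hsymm
  linear_combination hsymm / 2

/-- For `N ≥ 1` and `0 ≤ a < π`,
`∫_{[−a,a]^N} (Σ_i 1/(1+e^{iθ_i})) ∏_{i<j} |e^{iθ_i} − e^{iθ_j}|² dθ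
 = (N/2) ∫_{[−a,a]^N} ∏_{i<j} |e^{iθ_i} − e^{iθ_j}|² dθ`,
both sides regarded as complex numbers. -/
theorem stmt14 (N : ℕ) (hN : 1 ≤ N) (a : ℝ) (ha0 : 0 ≤ a) (haπ : a < π) :
    ∫ θ in Set.univ.pi (fun _ : Fin N => Set.Icc (-a) a),
        (∑ i : Fin N, (1 + Complex.exp ((θ i : ℂ) * Complex.I))⁻¹) * ((vdm2 θ : ℝ) : ℂ)
      = ((N : ℂ) / 2) *
        (((∫ θ in Set.univ.pi (fun _ : Fin N => Set.Icc (-a) a), vdm2 θ) : ℝ) : ℂ) :=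
  stmt14_general N a haπ
end

section
/- For every integer k ≥ 1, Σ_{j=1}^{2k−1} j · ln( sin²( jπ/(2k) ) ) = 2k·ln(2k) − 2k(2k−1)·ln 2. -/
/-!
For `n ≥ 1` and `ζ = exp (2πi/n)`, evaluating `∏_{j=1}^{n-1} (X - ζ^j) = 1 + X + ⋯ + X^{n-1}`
at `X = 1` and taking norms gives `∏_{j=1}^{n-1} 2 sin (jπ/n) = n`, hence
`∑_{j=1}^{n-1} log sin (jπ/n) = log n - (n - 1) log 2`. The weight `j` is removed by the
symmetry `sin ((n - j)π/n) = sin (jπ/n)`: pairing `j` with `n - j` turns the weighted sum into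
`n/2` times the unweighted one. Apply this with `n = 2k`.
-/

open Real Finset

lemma sin_natCast_mul_pi_div_pos {j n : ℕ} (hj : 0 < j) (hjn : j < n) :
    0 < sin (j * π / n) := by
  have hn : (0 : ℝ) < n := by exact_mod_cast hj.trans hjn
  apply sin_pos_of_pos_of_lt_pi (by positivity)
  rw [div_lt_iff₀ hn, mul_comm]
  gcongr

lemma sin_natCast_sub_mul_pi_div {j n : ℕ} (hn : n ≠ 0) (hjn : j ≤ n) :
    sin (((n - j : ℕ) : ℝ) * π / n) = sin (j * π / n) := by
  rw [Nat.cast_sub hjn, ← sin_pi_sub]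
  congr 1
  field_simp
  ring

lemma prod_two_mul_sin_natCast_mul_pi_div {n : ℕ} (hn : n ≠ 0) :
    ∏ j ∈ Ico 1 n, 2 * sin (j * π / n) = n := by
  obtain ⟨m, rfl⟩ := Nat.exists_eq_add_one_of_ne_zero hn
  have h := congrArg norm (Complex.isPrimitiveRoot_exp (m + 1) hn).prod_one_sub_pow_eq_order
  rw [norm_prod, ← Nat.cast_add_one, Complex.norm_natCast] at h
  rw [prod_Ico_eq_prod_range, Nat.add_sub_cancel]
  refine Eq.trans (prod_congr rfl fun j hj => ?_) h
  have hsin : 0 < sin ((1 + j : ℕ) * π / (m + 1 : ℕ)) :=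
    sin_natCast_mul_pi_div_pos (by omega) (by rw [mem_range] at hj; omega)
  have hpow : Complex.exp (2 * π * Complex.I / (m + 1 : ℕ)) ^ (j + 1)
      = Complex.exp (Complex.I * ((2 * ((1 + j : ℕ) * π / (m + 1 : ℕ)) : ℝ))) := by
    rw [← Complex.exp_nat_mul]
    push_cast
    ring_nf
  rw [norm_sub_rev, hpow, Complex.norm_exp_I_mul_ofReal_sub_one,
    mul_div_cancel_left₀ _ two_ne_zero, norm_of_nonneg (by positivity)]

lemma sum_log_sin_natCast_mul_pi_div {n : ℕ} (hn : n ≠ 0) :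
    ∑ j ∈ Ico 1 n, log (sin (j * π / n)) = log n - (n - 1) * log 2 := by
  have hsin : ∀ j ∈ Ico 1 n, sin (j * π / n) ≠ 0 := fun j hj =>
    (sin_natCast_mul_pi_div_pos (mem_Ico.1 hj).1 (mem_Ico.1 hj).2).ne'
  have h := congrArg log (prod_two_mul_sin_natCast_mul_pi_div hn)
  rw [log_prod fun j hj => mul_ne_zero two_ne_zero (hsin j hj),
    sum_congr rfl fun j hj => log_mul two_ne_zero (hsin j hj), sum_add_distrib, sum_const,
    Nat.card_Ico, nsmul_eq_mul, Nat.cast_pred (Nat.pos_of_ne_zero hn)] at h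
  linarith

lemma two_mul_sum_Ico_natCast_mul_of_reflect {R : Type*} [CommRing R] {n : ℕ} {g : ℕ → R}
    (hg : ∀ j ∈ Ico 1 n, g (n - j) = g j) :
    2 * ∑ j ∈ Ico 1 n, (j : R) * g j = n * ∑ j ∈ Ico 1 n, g j := by
  have hreflect := sum_Ico_reflect (fun j => (j : R) * g j) 1 (Nat.le_succ n)
  rw [Nat.add_sub_cancel, Nat.add_sub_cancel_left] at hreflect
  calc 2 * ∑ j ∈ Ico 1 n, (j : R) * g j
      = ∑ j ∈ Ico 1 n, (j : R) * g j + ∑ j ∈ Ico 1 n, ((n - j : ℕ) : R) * g (n - j) := by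
        rw [hreflect, two_mul]
    _ = n * ∑ j ∈ Ico 1 n, g j := by
        rw [← sum_add_distrib, mul_sum]
        refine sum_congr rfl fun j hj => ?_
        rw [hg j hj, Nat.cast_sub (mem_Ico.1 hj).2.le]
        ring

lemma two_mul_sum_natCast_mul_log_sin_natCast_mul_pi_div {n : ℕ} (hn : n ≠ 0) :
    2 * ∑ j ∈ Ico 1 n, (j : ℝ) * log (sin (j * π / n)) = n * (log n - (n - 1) * log 2) := by
  rw [two_mul_sum_Ico_natCast_mul_of_reflect fun j hj => by
    rw [sin_natCast_sub_mul_pi_div hn (mem_Ico.1 hj).2.le], sum_log_sin_natCast_mul_pi_div hn]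

/-- For every integer `k ≥ 1`,
`Σ_{j=1}^{2k−1} j ln(sin²(jπ/(2k))) = 2k ln(2k) − 2k(2k−1) ln 2`. -/
theorem stmt16 (k : ℕ) (hk : 1 ≤ k) :
    ∑ j ∈ Finset.Icc 1 (2 * k - 1), (j : ℝ) * Real.log (Real.sin ((j : ℝ) * π / (2 * k)) ^ 2)
      = 2 * (k : ℝ) * Real.log (2 * (k : ℝ))
        - 2 * (k : ℝ) * (2 * (k : ℝ) - 1) * Real.log 2 := by
  have h := two_mul_sum_natCast_mul_log_sin_natCast_mul_pi_div (n := 2 * k) (by omega)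
  push_cast at h
  rw [← Ico_add_one_right_eq_Icc, Nat.sub_add_cancel (by omega)]
  simp only [log_pow, Nat.cast_ofNat, mul_left_comm _ (2 : ℝ), ← mul_sum]
  linarith
end
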